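/- arXiv:math/0608390 — 3 statements merged into one kernel-verified Lean document; each statement's English description precedes it below -/
import Mathlib

section
/- Let g = g₋₁ ⊕ g₀ ⊕ g₁ be a Z-graded Lie algebra with a short grading and let f ∈ g₁. Then g₋₁ with the product a∘b := [[f,a],b] is a Jordan algebra, i.e., this product is commutative and satisfies the Jordan identity (a∘b)∘(a∘a) = a∘(b∘(a∘a)). -/
/-- A short grading `g = g₋₁ ⊕ g₀ ⊕ g₁` of a Lie algebra:
a direct sum decomposition with `[gᵢ, gⱼ] ⊆ g_{i+j}` (and `g_k = 0` for `|k| > 1`). -/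
structure ShortGrading (F : Type*) (L : Type*) [Field F] [LieRing L] [LieAlgebra F L] where
  gm : Submodule F L  -- g₋₁
  g0 : Submodule F L  -- g₀
  g1 : Submodule F L  -- g₁
  span : ∀ x : L, ∃ a ∈ gm, ∃ b ∈ g0, ∃ c ∈ g1, x = a + b + c
  indep : ∀ a ∈ gm, ∀ b ∈ g0, ∀ c ∈ g1, a + b + c = 0 → a = 0 ∧ b = 0 ∧ c = 0
  bmm : ∀ x ∈ gm, ∀ y ∈ gm, ⁅x, y⁆ = (0 : L)
  bm0 : ∀ x ∈ gm, ∀ y ∈ g0, ⁅x, y⁆ ∈ gm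
  bm1 : ∀ x ∈ gm, ∀ y ∈ g1, ⁅x, y⁆ ∈ g0
  b00 : ∀ x ∈ g0, ∀ y ∈ g0, ⁅x, y⁆ ∈ g0
  b01 : ∀ x ∈ g0, ∀ y ∈ g1, ⁅x, y⁆ ∈ g1
  b11 : ∀ x ∈ g1, ∀ y ∈ g1, ⁅x, y⁆ = (0 : L)

/-- For a short grading of a Lie algebra over a field of characteristic 0
and `f ∈ g₁`, the product `a∘b := [[f,a],b]` makes `g₋₁` a Jordan algebra:
it is commutative and satisfies the Jordan identity `(a∘b)∘(a∘a) = a∘(b∘(a∘a))`. -/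
theorem short_grading_gives_jordan
    (F : Type*) (L : Type*) [Field F] [CharZero F] [LieRing L] [LieAlgebra F L]
    (G : ShortGrading F L) (f : L) (hf : f ∈ G.g1) :
    ∀ a ∈ G.gm, ∀ b ∈ G.gm,
      ⁅⁅f, a⁆, b⁆ = ⁅⁅f, b⁆, a⁆ ∧
      ⁅⁅f, ⁅⁅f, a⁆, b⁆⁆, ⁅⁅f, a⁆, a⁆⁆ = ⁅⁅f, a⁆, ⁅⁅f, b⁆, ⁅⁅f, a⁆, a⁆⁆⁆ := by

  -- Commutativity of the product on `g₋₁`.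
  have comm : ∀ x ∈ G.gm, ∀ y ∈ G.gm, ⁅⁅f, x⁆, y⁆ = ⁅⁅f, y⁆, x⁆ := by
    intro x hx y hy
    have h := leibniz_lie f x y
    rw [G.bmm x hx y hy, lie_zero, ← lie_skew x ⁅f, y⁆] at h
    have h' : ⁅⁅f, x⁆, y⁆ - ⁅⁅f, y⁆, x⁆ = 0 := by
      rw [sub_eq_add_neg]; exact h.symm
    exact sub_eq_zero.mp h'
  -- The core identity: `⁅⁅f,x⁆, ⁅f, ⁅⁅f,x⁆,x⁆⁆⁆ = 0` for `x ∈ g₋₁`.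
  have core : ∀ x ∈ G.gm, ⁅⁅f, x⁆, ⁅f, ⁅⁅f, x⁆, x⁆⁆⁆ = 0 := by
    intro a ha
    set A := ⁅f, a⁆ with hA
    set P := ⁅f, A⁆ with hP
    set s := ⁅A, a⁆ with hs
    set Q := ⁅f, s⁆ with hQ
    -- memberships
    have hA0 : A ∈ G.g0 := by
      rw [hA, ← lie_skew]; exact Submodule.neg_mem _ (G.bm1 a ha f hf)
    have hP1 : P ∈ G.g1 := by
      rw [hP, ← lie_skew]; exact Submodule.neg_mem _ (G.b01 A hA0 f hf)
    have hsm : s ∈ G.gm := by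
      rw [hs, ← lie_skew]; exact Submodule.neg_mem _ (G.bm0 a ha A hA0)
    have hfP : ⁅f, P⁆ = 0 := G.b11 f hf P hP1
    -- h1 : Q = ⁅P, a⁆
    have h1 : Q = ⁅P, a⁆ := by
      rw [hQ, hs, leibniz_lie, ← hA, ← hP, lie_self, add_zero]
    -- h2 : ⁅f, Q⁆ = ⁅P, A⁆
    have h2 : ⁅f, Q⁆ = ⁅P, A⁆ := by
      rw [h1, leibniz_lie, hfP, zero_lie, zero_add, ← hA]
    -- h3 : ⁅a, Q⁆ = -⁅A, s⁆
    have h3 : ⁅a, Q⁆ = -⁅A, s⁆ := by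
      have h := leibniz_lie f a s
      rw [G.bmm a ha s hsm, lie_zero, ← hA, ← hQ] at h
      exact eq_neg_of_add_eq_zero_right h.symm
    -- h4 : -⁅f, ⁅A, s⁆⁆ = ⁅A, Q⁆ + ⁅a, ⁅P, A⁆⁆
    have h4 : -⁅f, ⁅A, s⁆⁆ = ⁅A, Q⁆ + ⁅a, ⁅P, A⁆⁆ := by
      have h := leibniz_lie f a Q
      rw [h3, lie_neg, h2, ← hA] at h
      exact h
    -- h5 : ⁅f, ⁅A, s⁆⁆ = ⁅P, s⁆ + ⁅A, Q⁆
    have h5 : ⁅f, ⁅A, s⁆⁆ = ⁅P, s⁆ + ⁅A, Q⁆ := by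
      rw [leibniz_lie, ← hP, ← hQ]
    -- h6 : ⁅A, Q⁆ = ⁅⁅A, P⁆, a⁆ + ⁅P, s⁆
    have h6 : ⁅A, Q⁆ = ⁅⁅A, P⁆, a⁆ + ⁅P, s⁆ := by
      rw [h1, leibniz_lie, ← hs]
    -- h7 : ⁅a, ⁅P, A⁆⁆ = ⁅⁅A, P⁆, a⁆
    have h7 : ⁅a, ⁅P, A⁆⁆ = ⁅⁅A, P⁆, a⁆ := by
      rw [← lie_skew a ⁅P, A⁆, ← neg_lie, lie_skew]
    set X := ⁅A, Q⁆ with hX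
    set Y := ⁅⁅A, P⁆, a⁆ with hY
    -- e1 : ⁅f, ⁅A, s⁆⁆ = X - Y + X
    have e1 : ⁅f, ⁅A, s⁆⁆ = X - Y + X := by
      have hPs : ⁅P, s⁆ = X - Y := by
        rw [h6]; abel
      rw [h5, hPs]
    -- e2 : ⁅f, ⁅A, s⁆⁆ = -(X + Y)
    have e2 : ⁅f, ⁅A, s⁆⁆ = -(X + Y) := by
      rw [← neg_neg ⁅f, ⁅A, s⁆⁆, h4, h7]
    have hcomb : X - Y + X = -(X + Y) := e1.symm.trans e2
    have h3X : X + X + X = 0 := by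
      calc X + X + X = (X - Y + X) + (X + Y) := by abel
        _ = -(X + Y) + (X + Y) := by rw [hcomb]
        _ = 0 := by abel
    have hsmul : (3 : F) • X = 0 := by
      rw [show (3 : F) = 1 + 1 + 1 by norm_num, add_smul, add_smul, one_smul]
      exact h3X
    have := smul_eq_zero.mp hsmul
    rcases this with h | h
    · exact absurd h (by norm_num)
    · exact h
  -- Now the main statement.
  intro a ha b hb
  have hA0 : ⁅f, a⁆ ∈ G.g0 := by
    rw [← lie_skew]; exact Submodule.neg_mem _ (G.bm1 a ha f hf)
  have hs : ⁅⁅f, a⁆, a⁆ ∈ G.gm := by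
    rw [← lie_skew]; exact Submodule.neg_mem _ (G.bm0 a ha _ hA0)
  have hc : ⁅⁅f, a⁆, b⁆ ∈ G.gm := by
    rw [← lie_skew]; exact Submodule.neg_mem _ (G.bm0 b hb _ hA0)
  refine ⟨comm a ha b hb, ?_⟩
  rw [comm _ hc _ hs, leibniz_lie]
  have hz : ⁅⁅f, ⁅⁅f, a⁆, a⁆⁆, ⁅f, a⁆⁆ = (0 : L) := by
    rw [← lie_skew, core a ha, neg_zero]
  rw [hz, zero_lie, zero_add, comm _ hs b hb]
end

section
/- Let A be a unital generalized Poisson algebra with bracket {·,·}, derivation D (so D(a) = {e,a}), and let φ ∈ A be an invertible element. Then the bracket {f,g}^φ := φ⁻¹{φf, φg} satisfies the Jacobi identity, is antisymmetric, and satisfies the generalized Leibniz rule with derivation D^φ(a) = D(φ)a + {φ, a}. -/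
/-- The gauge-twisted bracket `{f,g}^φ = φ⁻¹{φf, φg}`, written with `ψ = φ⁻¹`. -/
def twistedBr {F A : Type*} [Field F] [CommRing A] [Algebra F A]
    (br : A →ₗ[F] A →ₗ[F] A) (φ ψ : A) : A → A → A :=
  fun f g => ψ * br (φ * f) (φ * g)

/-- Let `A` be a unital generalized Poisson algebra with bracket
`{·,·}` and derivation `D(a) = {e,a}`, and let `φ ∈ A` be invertible with inverse
`ψ`. Then `{f,g}^φ := φ⁻¹{φf, φg}` is antisymmetric, satisfies the Jacobi identity,
and satisfies the generalized Leibniz rule with derivation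
`D^φ(a) = D(φ)a + {φ,a}`. -/
theorem twisted_bracket_genPoisson
    (F : Type*) [Field F] [CharZero F]
    (A : Type*) [CommRing A] [Algebra F A]
    (br : A →ₗ[F] A →ₗ[F] A) (D : A →ₗ[F] A)
    (halt : ∀ a : A, br a a = 0)
    (hjac : ∀ a b c : A, br a (br b c) = br (br a b) c + br b (br a c))
    (hD : ∀ a : A, D a = br 1 a)
    (hleib : ∀ a b c : A, br a (b * c) = br a b * c + b * br a c + D a * (b * c))
    (φ ψ : A) (hinv : φ * ψ = 1) :
    (∀ f g : A, twistedBr br φ ψ f g = - twistedBr br φ ψ g f) ∧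
    (∀ f g h : A, twistedBr br φ ψ f (twistedBr br φ ψ g h) =
        twistedBr br φ ψ (twistedBr br φ ψ f g) h +
        twistedBr br φ ψ g (twistedBr br φ ψ f h)) ∧
    (∀ a b c : A, twistedBr br φ ψ a (b * c) =
        twistedBr br φ ψ a b * c + b * twistedBr br φ ψ a c +
        (D φ * a + br φ a) * (b * c)) := by
  have hskew : ∀ a b : A, br a b = - br b a := by
    intro a b
    have h := halt (a + b)
    simp only [map_add, LinearMap.add_apply, halt a, halt b] at h
    linear_combination h
  have hkey : ∀ x : A, φ * (ψ * x) = x := by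
    intro x; rw [← mul_assoc, hinv, one_mul]
  refine ⟨?_, ?_, ?_⟩
  · intro f g
    simp only [twistedBr]
    rw [hskew (φ * f) (φ * g)]
    ring
  · intro f g h
    simp only [twistedBr]
    rw [hkey (br (φ * g) (φ * h)), hkey (br (φ * f) (φ * g)),
      hkey (br (φ * f) (φ * h)), hjac]
    ring
  · intro a b c
    simp only [twistedBr]
    have h1 : br (φ * a) (φ * (b * c)) = br (φ * a) (φ * b) * c +
        (φ * b) * br (φ * a) c + D (φ * a) * ((φ * b) * c) := by
      rw [show φ * (b * c) = (φ * b) * c by ring]; exact hleib _ _ _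
    have h2 := hleib (φ * a) φ c
    have h3 := hleib φ φ a
    rw [halt φ] at h3
    have h4 := hskew (φ * a) φ
    linear_combination ψ * h1 - b * ψ * h2 - b * ψ * c * h4 + b * ψ * c * h3 +
      b * c * (br φ a + D φ * a) * hinv
end

section
/- Let g = g₋₁ ⊕ g₀ ⊕ g₁ be a short grading of a simple Lie algebra g. Then g₋₁ is an irreducible g₀-module, i.e., g₋₁ has no g₀-invariant subspaces other than 0 and g₋₁, provided g₋₁ ≠ 0. -/
/-- For a short grading `g = g₋₁ ⊕ g₀ ⊕ g₁` of a simple Lie algebra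
`g` with `g₋₁ ≠ 0`, the `g₀`-module `g₋₁` is irreducible: it has no
`g₀`-invariant subspaces other than `0` and `g₋₁`. -/
theorem simple_short_grading_irreducible
    (F : Type*) (L : Type*) [Field F] [CharZero F] [LieRing L] [LieAlgebra F L]
    (G : ShortGrading F L)
    (hsimple : LieAlgebra.IsSimple F L)
    (hnz : G.gm ≠ ⊥) :
    ∀ W : Submodule F L, W ≤ G.gm →
      (∀ x ∈ G.g0, ∀ w ∈ W, ⁅x, w⁆ ∈ W) → W = ⊥ ∨ W = G.gm := by
  intro W hWgm hWinv
  by_cases hW : W = ⊥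
  · exact Or.inl hW
  right
  -- B := span [W, g₁], C := span [[W, g₁], g₁]
  set B : Submodule F L :=
    Submodule.span F {z : L | ∃ w ∈ W, ∃ y ∈ G.g1, z = ⁅w, y⁆} with hBdef
  set C : Submodule F L :=
    Submodule.span F {z : L | ∃ w ∈ W, ∃ y ∈ G.g1, ∃ y' ∈ G.g1, z = ⁅⁅w, y⁆, y'⁆} with hCdef
  have hB0 : B ≤ G.g0 := by
    rw [hBdef, Submodule.span_le]
    rintro z ⟨w, hw, y, hy, rfl⟩
    exact G.bm1 w (hWgm hw) y hy
  have hC1 : C ≤ G.g1 := by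
    rw [hCdef, Submodule.span_le]
    rintro z ⟨w, hw, y, hy, y', hy', rfl⟩
    exact G.b01 _ (G.bm1 w (hWgm hw) y hy) y' hy'
  have hBgen : ∀ w ∈ W, ∀ y ∈ G.g1, (⁅w, y⁆ : L) ∈ B := fun w hw y hy =>
    Submodule.subset_span ⟨w, hw, y, hy, rfl⟩
  have hCgen : ∀ w ∈ W, ∀ y ∈ G.g1, ∀ y' ∈ G.g1, (⁅⁅w, y⁆, y'⁆ : L) ∈ C :=
    fun w hw y hy y' hy' => Submodule.subset_span ⟨w, hw, y, hy, y', hy', rfl⟩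
  -- brackets with W
  have hmW : ∀ a ∈ G.gm, ∀ w ∈ W, ⁅a, w⁆ = (0 : L) := fun a ha w hw =>
    G.bmm a ha w (hWgm hw)
  have h0W : ∀ b ∈ G.g0, ∀ w ∈ W, ⁅b, w⁆ ∈ W := hWinv
  have h1W : ∀ c ∈ G.g1, ∀ w ∈ W, ⁅c, w⁆ ∈ B := by
    intro c hc w hw
    rw [← lie_skew]
    exact B.neg_mem (hBgen w hw c hc)
  -- brackets with B
  have hmB : ∀ a ∈ G.gm, ∀ m ∈ B, ⁅a, m⁆ ∈ W := by
    intro a ha m hm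
    induction hm using Submodule.span_induction with
    | mem z hz =>
      obtain ⟨w, hw, y, hy, rfl⟩ := hz
      rw [leibniz_lie, hmW a ha w hw, zero_lie, zero_add, ← lie_skew]
      exact W.neg_mem (hWinv _ (G.bm1 a ha y hy) w hw)
    | zero => simpa using W.zero_mem
    | add x y _ _ hx hy => rw [lie_add]; exact W.add_mem hx hy
    | smul t x _ hx => rw [lie_smul]; exact W.smul_mem t hx
  have h0B : ∀ b ∈ G.g0, ∀ m ∈ B, ⁅b, m⁆ ∈ B := by
    intro b hb m hm
    induction hm using Submodule.span_induction with
    | mem z hz =>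
      obtain ⟨w, hw, y, hy, rfl⟩ := hz
      rw [leibniz_lie]
      exact B.add_mem (hBgen _ (hWinv b hb w hw) y hy) (hBgen w hw _ (G.b01 b hb y hy))
    | zero => simpa using B.zero_mem
    | add x y _ _ hx hy => rw [lie_add]; exact B.add_mem hx hy
    | smul t x _ hx => rw [lie_smul]; exact B.smul_mem t hx
  have h1B : ∀ m ∈ B, ∀ c ∈ G.g1, ⁅m, c⁆ ∈ C := by
    intro m hm c hc
    induction hm using Submodule.span_induction with
    | mem z hz =>
      obtain ⟨w, hw, y, hy, rfl⟩ := hz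
      exact hCgen w hw y hy c hc
    | zero => simpa using C.zero_mem
    | add x y _ _ hx hy => rw [add_lie]; exact C.add_mem hx hy
    | smul t x _ hx => rw [smul_lie]; exact C.smul_mem t hx
  have h1B' : ∀ c ∈ G.g1, ∀ m ∈ B, ⁅c, m⁆ ∈ C := by
    intro c hc m hm
    rw [← lie_skew]
    exact C.neg_mem (h1B m hm c hc)
  have hB0' : ∀ m ∈ B, ∀ b ∈ G.g0, ⁅m, b⁆ ∈ B := by
    intro m hm b hb
    rw [← lie_skew]
    exact B.neg_mem (h0B b hb m hm)
  -- brackets with C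
  have hmC : ∀ a ∈ G.gm, ∀ m ∈ C, ⁅a, m⁆ ∈ B := by
    intro a ha m hm
    induction hm using Submodule.span_induction with
    | mem z hz =>
      obtain ⟨w, hw, y, hy, y', hy', rfl⟩ := hz
      rw [leibniz_lie]
      refine B.add_mem ?_ ?_
      · exact hBgen _ (hmB a ha _ (hBgen w hw y hy)) y' hy'
      · exact hB0' _ (hBgen w hw y hy) _ (G.bm1 a ha y' hy')
    | zero => simpa using B.zero_mem
    | add x y _ _ hx hy => rw [lie_add]; exact B.add_mem hx hy
    | smul t x _ hx => rw [lie_smul]; exact B.smul_mem t hx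
  have h0C : ∀ b ∈ G.g0, ∀ m ∈ C, ⁅b, m⁆ ∈ C := by
    intro b hb m hm
    induction hm using Submodule.span_induction with
    | mem z hz =>
      obtain ⟨w, hw, y, hy, y', hy', rfl⟩ := hz
      rw [leibniz_lie]
      refine C.add_mem ?_ ?_
      · exact h1B _ (h0B b hb _ (hBgen w hw y hy)) y' hy'
      · exact h1B _ (hBgen w hw y hy) _ (G.b01 b hb y' hy')
    | zero => simpa using C.zero_mem
    | add x y _ _ hx hy => rw [lie_add]; exact C.add_mem hx hy
    | smul t x _ hx => rw [lie_smul]; exact C.smul_mem t hx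
  have h1C : ∀ c ∈ G.g1, ∀ m ∈ C, ⁅c, m⁆ = (0 : L) := fun c hc m hm =>
    G.b11 c hc m (hC1 hm)
  -- the ideal
  set S : Submodule F L := W ⊔ B ⊔ C with hSdef
  have hWS : W ≤ S := le_trans le_sup_left le_sup_left
  have hBS : B ≤ S := le_trans le_sup_right le_sup_left
  have hCS : C ≤ S := le_sup_right
  have key : ∀ (x : L), ∀ m ∈ S, ⁅x, m⁆ ∈ S := by
    have keyW : ∀ (x : L), ∀ w ∈ W, ⁅x, w⁆ ∈ S := by
      intro x w hw
      obtain ⟨a, ha, b, hb, c, hc, rfl⟩ := G.span x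
      rw [add_lie, add_lie, hmW a ha w hw, zero_add]
      exact S.add_mem (hWS (h0W b hb w hw)) (hBS (h1W c hc w hw))
    have keyB : ∀ (x : L), ∀ m ∈ B, ⁅x, m⁆ ∈ S := by
      intro x m hm
      obtain ⟨a, ha, b, hb, c, hc, rfl⟩ := G.span x
      rw [add_lie, add_lie]
      exact S.add_mem (S.add_mem (hWS (hmB a ha m hm)) (hBS (h0B b hb m hm)))
        (hCS (h1B' c hc m hm))
    have keyC : ∀ (x : L), ∀ m ∈ C, ⁅x, m⁆ ∈ S := by
      intro x m hm
      obtain ⟨a, ha, b, hb, c, hc, rfl⟩ := G.span x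
      rw [add_lie, add_lie, h1C c hc m hm, add_zero]
      exact S.add_mem (hBS (hmC a ha m hm)) (hCS (h0C b hb m hm))
    intro x m hm
    rw [hSdef] at hm
    obtain ⟨u, hu, q, hq, rfl⟩ := Submodule.mem_sup.mp hm
    obtain ⟨w, hw, p, hp, rfl⟩ := Submodule.mem_sup.mp hu
    rw [lie_add, lie_add]
    exact S.add_mem (S.add_mem (keyW x w hw) (keyB x p hp)) (keyC x q hq)
  let I : LieIdeal F L := { S with lie_mem := fun {x m} hm => key x m hm }
  have hmemI : ∀ z : L, z ∈ I ↔ z ∈ S := fun z => Iff.rfl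
  have hIbot : I ≠ ⊥ := by
    intro h
    apply hW
    rw [eq_bot_iff]
    intro w hw
    have : w ∈ I := (hmemI w).mpr (hWS hw)
    rw [h] at this
    simpa using this
  have hItop : I = ⊤ := (hsimple.eq_bot_or_eq_top I).resolve_left hIbot
  -- conclude gm ≤ W
  refine le_antisymm hWgm ?_
  intro x hx
  have hxS : x ∈ S := by
    have : x ∈ I := hItop ▸ (LieSubmodule.mem_top x)
    exact (hmemI x).mp this
  rw [hSdef] at hxS
  obtain ⟨u, hu, q, hq, rfl⟩ := Submodule.mem_sup.mp hxS
  obtain ⟨w, hw, p, hp, rfl⟩ := Submodule.mem_sup.mp hu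
  have hzero : (w + p + q - w) + (-p) + (-q) = 0 := by abel
  have := G.indep _ (by simpa using Submodule.sub_mem _ hx (hWgm hw)) _
    (G.g0.neg_mem (hB0 hp)) _ (G.g1.neg_mem (hC1 hq)) hzero
  have hp0 : p = 0 := by have := this.2.1; simpa using this
  have hq0 : q = 0 := by have := this.2.2; simpa using this
  simpa [hp0, hq0] using hw
end
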